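/- arXiv:1107.0850 — 5 statements merged into one kernel-verified Lean document; each statement's English description precedes it below -/
import Mathlib

section
/- Let λ_n, μ_n > 0 for n ∈ ℤ and let V be the infinite tridiagonal matrix with (V)_{n,n-1} = μ_n, (V)_{n,n+1} = λ_n, and zeros elsewhere, acting on sequences from the right: (xV)_k = μ_{k+1} x_{k+1} + λ_{k-1} x_{k-1}. If V is bounded as an operator on the weighted ℓ¹ space with norm ‖x‖ = Σ_n c_n |x_n| for some positive weights c_n > 0, then sup_{n∈ℤ} λ_n μ_{n+1} < ∞. -/
lemma delta_test (lam mu c : ℤ → ℝ) (hc : ∀ n, 0 < c n) (K : ℝ)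
    (hbound : ∀ x : ℤ → ℝ, Summable (fun n : ℤ => c n * |x n|) →
      Summable (fun k : ℤ => c k * |mu (k + 1) * x (k + 1) + lam (k - 1) * x (k - 1)|) ∧
      (∑' k : ℤ, c k * |mu (k + 1) * x (k + 1) + lam (k - 1) * x (k - 1)|) ≤
        K * ∑' n : ℤ, c n * |x n|) (m j : ℤ) :
    c j * |mu (j + 1) * (if j + 1 = m then (1:ℝ) else 0) +
      lam (j - 1) * (if j - 1 = m then (1:ℝ) else 0)| ≤ K * c m := by
  set x : ℤ → ℝ := fun k => if k = m then 1 else 0 with hx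
  have hsum : Summable (fun n : ℤ => c n * |x n|) := by
    apply summable_of_ne_finset_zero (s := {m})
    intro n hn
    simp only [Finset.mem_singleton] at hn
    simp [hx, hn]
  obtain ⟨hS, hB⟩ := hbound x hsum
  have htsum : (∑' n : ℤ, c n * |x n|) = c m := by
    rw [tsum_eq_single m]
    · simp [hx]
    · intro n hn; simp [hx, hn]
  rw [htsum] at hB
  refine le_trans ?_ hB
  exact Summable.le_tsum hS j (fun k _ => mul_nonneg (hc k).le (abs_nonneg _))

/-- If the tridiagonal operator V is bounded on a weighted ℓ¹ space, then
    sup_n λ_n μ_{n+1} < ∞. -/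
theorem stmt_3 (lam mu : ℤ → ℝ) (hlam : ∀ n, 0 < lam n) (hmu : ∀ n, 0 < mu n)
    (c : ℤ → ℝ) (hc : ∀ n, 0 < c n)
    (K : ℝ)
    (hbound : ∀ x : ℤ → ℝ, Summable (fun n : ℤ => c n * |x n|) →
      Summable (fun k : ℤ => c k * |mu (k + 1) * x (k + 1) + lam (k - 1) * x (k - 1)|) ∧
      (∑' k : ℤ, c k * |mu (k + 1) * x (k + 1) + lam (k - 1) * x (k - 1)|) ≤
        K * ∑' n : ℤ, c n * |x n|) :
    ∃ B : ℝ, ∀ n : ℤ, lam n * mu (n + 1) ≤ B := by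
  refine ⟨K * K, fun n => ?_⟩
  -- x = δ_n, evaluate at k = n+1: c(n+1) * lam n ≤ K * c n
  have h1 := delta_test lam mu c hc K hbound n (n + 1)
  have e1 : n + 1 + 1 ≠ n := by omega
  have e2 : n + 1 - 1 = n := by ring
  rw [if_neg e1, if_pos e2] at h1
  have h1' : c (n + 1) * lam n ≤ K * c n := by
    have : |mu (n + 1 + 1) * 0 + lam (n + 1 - 1) * 1| = lam (n + 1 - 1) := by
      rw [mul_zero, mul_one, zero_add, abs_of_pos (hlam _)]
    rw [this, e2] at h1
    exact h1
  -- x = δ_{n+1}, evaluate at k = n: c n * mu (n+1) ≤ K * c (n+1)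
  have h2 := delta_test lam mu c hc K hbound (n + 1) n
  have e3 : (n : ℤ) + 1 = n + 1 := rfl
  have e4 : n - 1 ≠ n + 1 := by omega
  rw [if_pos e3, if_neg e4] at h2
  have h2' : c n * mu (n + 1) ≤ K * c (n + 1) := by
    have : |mu (n + 1) * 1 + lam (n - 1) * 0| = mu (n + 1) := by
      rw [mul_zero, mul_one, add_zero, abs_of_pos (hmu _)]
    rw [this] at h2
    exact h2
  have hcn := hc n
  have hcn1 := hc (n + 1)
  have hK : 0 < K := by nlinarith [mul_pos hcn1 (hlam n)]
  have hmul : (c (n + 1) * lam n) * (c n * mu (n + 1)) ≤ (K * c n) * (K * c (n + 1)) :=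
    mul_le_mul h1' h2' (mul_pos hcn (hmu (n + 1))).le (mul_pos hK hcn).le
  have hpos : 0 < c n * c (n + 1) := mul_pos hcn hcn1
  nlinarith [hmul, hpos]
end

section
/- Let α ∈ ℝ, L, M ∈ ℝ, β : ℤ → (0,∞) with sup_n β(n) < ∞, and define λ_n = β(n)e^{-n+L}, μ_n = β(n-1)e^{n-M}. Let V be the operator (νV)_k = λ_{k-1}ν_{k-1} + μ_{k+1}ν_{k+1}. Then there is a constant C (depending only on α and sup β) such that for every ν in the Banach space B_α⁺ with norm ‖ν‖ = Σ_k e^{k²/2 + α|k|}|ν_k|, one has ‖νV‖ ≤ C(e^L + e^{-M})‖ν‖. -/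
set_option maxHeartbeats 1000000


/-- The off-diagonal part V of the generator is bounded on B_α⁺ with
    ‖νV‖ ≤ C (e^L + e^{-M}) ‖ν‖, where C depends only on α and sup β. -/
theorem stmt_6 (α Bsup : ℝ) :
    ∃ C : ℝ, 0 < C ∧
      ∀ (β : ℤ → ℝ), (∀ n, 0 < β n) → (∀ n, β n ≤ Bsup) →
      ∀ (L M : ℝ) (lam mu : ℤ → ℝ),
        (∀ n : ℤ, lam n = β n * Real.exp (-(n : ℝ) + L)) →
        (∀ n : ℤ, mu n = β (n - 1) * Real.exp ((n : ℝ) - M)) →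
        ∀ ν : ℤ → ℝ,
          Summable (fun k : ℤ => Real.exp ((k : ℝ) ^ 2 / 2 + α * |(k : ℝ)|) * |ν k|) →
          Summable (fun k : ℤ => Real.exp ((k : ℝ) ^ 2 / 2 + α * |(k : ℝ)|) *
              |lam (k - 1) * ν (k - 1) + mu (k + 1) * ν (k + 1)|) ∧
          (∑' k : ℤ, Real.exp ((k : ℝ) ^ 2 / 2 + α * |(k : ℝ)|) *
              |lam (k - 1) * ν (k - 1) + mu (k + 1) * ν (k + 1)|) ≤
            C * (Real.exp L + Real.exp (-M)) *
              ∑' k : ℤ, Real.exp ((k : ℝ) ^ 2 / 2 + α * |(k : ℝ)|) * |ν k| := by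
  set C : ℝ := (max Bsup 1) * Real.exp (1/2 + |α|) with hCdef
  have hCpos : 0 < C :=
    mul_pos (lt_of_lt_of_le one_pos (le_max_right _ _)) (Real.exp_pos _)
  refine ⟨C, hCpos, ?_⟩
  intro β hβpos hβle L M lam mu hlam hmu ν hν
  set w : ℤ → ℝ := fun k => Real.exp ((k : ℝ) ^ 2 / 2 + α * |(k : ℝ)|) with hw
  have hwpos : ∀ k, 0 < w k := fun k => Real.exp_pos _
  have hB : ∀ n, β n ≤ max Bsup 1 := fun n => (hβle n).trans (le_max_left _ _)
  have habs : ∀ x y : ℝ, |x - y| ≤ 1 → α * |x| - α * |y| ≤ |α| := by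
    intro x y h
    have h3 : |(|x| - |y|)| ≤ 1 := le_trans (abs_abs_sub_abs_le_abs_sub x y) h
    calc α * |x| - α * |y| = α * (|x| - |y|) := by ring
    _ ≤ |α * (|x| - |y|)| := le_abs_self _
    _ = |α| * |(|x| - |y|)| := abs_mul _ _
    _ ≤ |α| * 1 := mul_le_mul_of_nonneg_left h3 (abs_nonneg α)
    _ = |α| := mul_one _
  -- key pointwise bounds
  have key1 : ∀ k : ℤ, w k * lam (k - 1) ≤ C * Real.exp L * w (k - 1) := by
    intro k
    rw [hlam]
    have hcast : ((k - 1 : ℤ) : ℝ) = (k : ℝ) - 1 := by push_cast; ring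
    rw [hcast]
    have h2 : Real.exp ((k : ℝ) ^ 2 / 2 + α * |(k : ℝ)|) * Real.exp (-((k : ℝ) - 1) + L)
        ≤ Real.exp (1/2 + |α|) * Real.exp L *
          Real.exp (((k : ℝ) - 1) ^ 2 / 2 + α * |(k : ℝ) - 1|) := by
      rw [← Real.exp_add, ← Real.exp_add, ← Real.exp_add]
      apply Real.exp_le_exp.2
      have ha := habs (k : ℝ) ((k : ℝ) - 1) (by simp)
      nlinarith [ha]
    calc w k * (β (k - 1) * Real.exp (-((k : ℝ) - 1) + L))
        = β (k - 1) * (Real.exp ((k : ℝ) ^ 2 / 2 + α * |(k : ℝ)|) *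
            Real.exp (-((k : ℝ) - 1) + L)) := by rw [hw]; ring
      _ ≤ (max Bsup 1) * (Real.exp (1/2 + |α|) * Real.exp L *
            Real.exp (((k : ℝ) - 1) ^ 2 / 2 + α * |(k : ℝ) - 1|)) := by
          apply mul_le_mul (hB _) h2 (by positivity)
            (le_trans zero_le_one (le_max_right _ _))
      _ = C * Real.exp L * w (k - 1) := by simp only [hw]; push_cast; ring
  have key2 : ∀ k : ℤ, w k * mu (k + 1) ≤ C * Real.exp (-M) * w (k + 1) := by
    intro k
    rw [hmu]
    have hcast : ((k + 1 : ℤ) : ℝ) = (k : ℝ) + 1 := by push_cast; ring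
    have hidx : (k + 1 - 1 : ℤ) = k := by ring
    rw [hcast, hidx]
    have h2 : Real.exp ((k : ℝ) ^ 2 / 2 + α * |(k : ℝ)|) * Real.exp (((k : ℝ) + 1) - M)
        ≤ Real.exp (1/2 + |α|) * Real.exp (-M) *
          Real.exp (((k : ℝ) + 1) ^ 2 / 2 + α * |(k : ℝ) + 1|) := by
      rw [← Real.exp_add, ← Real.exp_add, ← Real.exp_add]
      apply Real.exp_le_exp.2
      have ha := habs (k : ℝ) ((k : ℝ) + 1) (by simp)
      nlinarith [ha]
    calc w k * (β k * Real.exp (((k : ℝ) + 1) - M))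
        = β k * (Real.exp ((k : ℝ) ^ 2 / 2 + α * |(k : ℝ)|) *
            Real.exp (((k : ℝ) + 1) - M)) := by rw [hw]; ring
      _ ≤ (max Bsup 1) * (Real.exp (1/2 + |α|) * Real.exp (-M) *
            Real.exp (((k : ℝ) + 1) ^ 2 / 2 + α * |(k : ℝ) + 1|)) := by
          apply mul_le_mul (hB _) h2 (by positivity)
            (le_trans zero_le_one (le_max_right _ _))
      _ = C * Real.exp (-M) * w (k + 1) := by simp only [hw]; push_cast; ring
  have hlamnn : ∀ n, 0 ≤ lam n := by
    intro n; rw [hlam]; exact mul_nonneg (hβpos n).le (Real.exp_pos _).le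
  have hmunn : ∀ n, 0 ≤ mu n := by
    intro n; rw [hmu]; exact mul_nonneg (hβpos _).le (Real.exp_pos _).le
  set f : ℤ → ℝ := fun k => w k * |ν k| with hf
  have hνf : Summable f := hν
  have hf1 : Summable (fun k : ℤ => f (k - 1)) :=
    (Equiv.subRight (1 : ℤ)).summable_iff.mpr hνf
  have hf2 : Summable (fun k : ℤ => f (k + 1)) :=
    (Equiv.addRight (1 : ℤ)).summable_iff.mpr hνf
  have hg1le : ∀ k : ℤ, w k * (lam (k - 1) * |ν (k - 1)|) ≤ C * Real.exp L * f (k - 1) := by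
    intro k
    have := mul_le_mul_of_nonneg_right (key1 k) (abs_nonneg (ν (k - 1)))
    calc w k * (lam (k - 1) * |ν (k - 1)|) = w k * lam (k - 1) * |ν (k - 1)| := by ring
      _ ≤ C * Real.exp L * w (k - 1) * |ν (k - 1)| := this
      _ = C * Real.exp L * f (k - 1) := by rw [hf]; ring
  have hg2le : ∀ k : ℤ, w k * (mu (k + 1) * |ν (k + 1)|) ≤ C * Real.exp (-M) * f (k + 1) := by
    intro k
    have := mul_le_mul_of_nonneg_right (key2 k) (abs_nonneg (ν (k + 1)))
    calc w k * (mu (k + 1) * |ν (k + 1)|) = w k * mu (k + 1) * |ν (k + 1)| := by ring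
      _ ≤ C * Real.exp (-M) * w (k + 1) * |ν (k + 1)| := this
      _ = C * Real.exp (-M) * f (k + 1) := by rw [hf]; ring
  have hg1 : Summable (fun k : ℤ => w k * (lam (k - 1) * |ν (k - 1)|)) :=
    Summable.of_nonneg_of_le
      (fun k => mul_nonneg (hwpos k).le (mul_nonneg (hlamnn _) (abs_nonneg _)))
      hg1le (hf1.mul_left (C * Real.exp L))
  have hg2 : Summable (fun k : ℤ => w k * (mu (k + 1) * |ν (k + 1)|)) :=
    Summable.of_nonneg_of_le
      (fun k => mul_nonneg (hwpos k).le (mul_nonneg (hmunn _) (abs_nonneg _)))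
      hg2le (hf2.mul_left (C * Real.exp (-M)))
  have hle : ∀ k : ℤ, w k * |lam (k - 1) * ν (k - 1) + mu (k + 1) * ν (k + 1)|
      ≤ w k * (lam (k - 1) * |ν (k - 1)|) + w k * (mu (k + 1) * |ν (k + 1)|) := by
    intro k
    have h1 : |lam (k - 1) * ν (k - 1) + mu (k + 1) * ν (k + 1)|
        ≤ lam (k - 1) * |ν (k - 1)| + mu (k + 1) * |ν (k + 1)| := by
      calc |lam (k - 1) * ν (k - 1) + mu (k + 1) * ν (k + 1)|
          ≤ |lam (k - 1) * ν (k - 1)| + |mu (k + 1) * ν (k + 1)| := abs_add_le _ _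
        _ = lam (k - 1) * |ν (k - 1)| + mu (k + 1) * |ν (k + 1)| := by
            rw [abs_mul, abs_mul, abs_of_nonneg (hlamnn _), abs_of_nonneg (hmunn _)]
    calc w k * |lam (k - 1) * ν (k - 1) + mu (k + 1) * ν (k + 1)|
        ≤ w k * (lam (k - 1) * |ν (k - 1)| + mu (k + 1) * |ν (k + 1)|) :=
          mul_le_mul_of_nonneg_left h1 (hwpos k).le
      _ = w k * (lam (k - 1) * |ν (k - 1)|) + w k * (mu (k + 1) * |ν (k + 1)|) := by ring
  have hsum : Summable (fun k : ℤ =>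
      w k * |lam (k - 1) * ν (k - 1) + mu (k + 1) * ν (k + 1)|) :=
    Summable.of_nonneg_of_le
      (fun k => mul_nonneg (hwpos k).le (abs_nonneg _)) hle (hg1.add hg2)
  refine ⟨hsum, ?_⟩
  have ht1 : (∑' k : ℤ, C * Real.exp L * f (k - 1)) = C * Real.exp L * ∑' k, f k := by
    rw [tsum_mul_left]
    congr 1
    exact (Equiv.subRight (1 : ℤ)).tsum_eq f
  have ht2 : (∑' k : ℤ, C * Real.exp (-M) * f (k + 1)) = C * Real.exp (-M) * ∑' k, f k := by
    rw [tsum_mul_left]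
    congr 1
    exact (Equiv.addRight (1 : ℤ)).tsum_eq f
  calc (∑' k : ℤ, w k * |lam (k - 1) * ν (k - 1) + mu (k + 1) * ν (k + 1)|)
      ≤ ∑' k : ℤ, (w k * (lam (k - 1) * |ν (k - 1)|) + w k * (mu (k + 1) * |ν (k + 1)|)) :=
        Summable.tsum_le_tsum hle hsum (hg1.add hg2)
    _ = (∑' k : ℤ, w k * (lam (k - 1) * |ν (k - 1)|))
        + ∑' k : ℤ, w k * (mu (k + 1) * |ν (k + 1)|) := Summable.tsum_add hg1 hg2
    _ ≤ (∑' k : ℤ, C * Real.exp L * f (k - 1))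
        + ∑' k : ℤ, C * Real.exp (-M) * f (k + 1) := by
        gcongr ?_ + ?_
        · exact Summable.tsum_le_tsum hg1le hg1 (hf1.mul_left _)
        · exact Summable.tsum_le_tsum hg2le hg2 (hf2.mul_left _)
    _ = C * Real.exp L * (∑' k, f k) + C * Real.exp (-M) * (∑' k, f k) := by
        rw [ht1, ht2]
    _ = C * (Real.exp L + Real.exp (-M)) * ∑' k, f k := by ring
end

section
/- Fix c = 1, C_λ = C_μ > 0, β : ℤ → (0,∞). For each s ∈ ℝ, set d(s) = ln[ C_λ · (Σ_l e^{-(l-s)²}) / (Σ_k β(k) e^{-(k-s)²} e^{-k+s}) ], L_s = s + d(s), M_s = s - d(s), and π_s(n) = e^{-(n-s)²}/Ξ with Ξ = Σ_n e^{-(n-s)²}. Then (π_s, L_s, M_s) is a fixed point of the system: (i) λ_{n-1}π_s(n-1) - (λ_n + μ_n)π_s(n) + μ_{n+1}π_s(n+1) = 0 for all n, where λ_n = β(n)e^{-n+L_s}, μ_n = β(n-1)e^{n-M_s}; (ii) Σ_n π_s(n)λ_n = C_λ; (iii) Σ_n π_s(n)μ_n = C_μ. Moreover s = (L_s + M_s)/2.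 -/
lemma gauss_nat_summable (t : ℝ) :
    Summable (fun n : ℕ => Real.exp (-((n : ℝ) - t) ^ 2)) := by
  have hgeo : Summable (fun n : ℕ => Real.exp (t + 1/4) * Real.exp (-1 : ℝ) ^ n) :=
    (summable_geometric_of_lt_one (le_of_lt (Real.exp_pos _))
      (Real.exp_lt_one_iff.mpr (by norm_num))).mul_left _
  refine Summable.of_nonneg_of_le (fun n => (Real.exp_pos _).le) (fun n => ?_) hgeo
  rw [← Real.exp_nat_mul, ← Real.exp_add]
  apply Real.exp_le_exp.mpr
  nlinarith [sq_nonneg ((n : ℝ) - t - 1/2)]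

lemma gauss_summable (t : ℝ) :
    Summable (fun n : ℤ => Real.exp (-((n : ℝ) - t) ^ 2)) := by
  refine Summable.of_nat_of_neg ((gauss_nat_summable t).congr fun n => rfl) ?_
  refine (gauss_nat_summable (-t)).congr fun n => ?_
  push_cast
  ring_nf

/-- For each s ∈ ℝ, the triple (π_s, L_s, M_s) given by the explicit formulas is a
    fixed point of the nonlinear system, and s = (L_s + M_s)/2. -/
theorem stmt_7 (Cl : ℝ) (hCl : 0 < Cl) (β : ℤ → ℝ) (hβ : ∀ n, 0 < β n)
    (hβb : ∃ B : ℝ, ∀ n, β n ≤ B) (s : ℝ)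
    (Ξ : ℝ) (hΞ : Ξ = ∑' n : ℤ, Real.exp (-((n : ℝ) - s) ^ 2))
    (d : ℝ) (hd : d = Real.log (Cl * Ξ /
      (∑' k : ℤ, β k * Real.exp (-((k : ℝ) - s) ^ 2) * Real.exp (-(k : ℝ) + s))))
    (Ls Ms : ℝ) (hLs : Ls = s + d) (hMs : Ms = s - d)
    (π lam mu : ℤ → ℝ)
    (hπ : ∀ n : ℤ, π n = Real.exp (-((n : ℝ) - s) ^ 2) / Ξ)
    (hlam : ∀ n : ℤ, lam n = β n * Real.exp (-(n : ℝ) + Ls))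
    (hmu : ∀ n : ℤ, mu n = β (n - 1) * Real.exp ((n : ℝ) - Ms)) :
    (∀ n : ℤ, lam (n - 1) * π (n - 1) - (lam n + mu n) * π n + mu (n + 1) * π (n + 1) = 0) ∧
      (∑' n : ℤ, π n * lam n) = Cl ∧
      (∑' n : ℤ, π n * mu n) = Cl ∧
      s = (Ls + Ms) / 2 := by
  obtain ⟨B, hB⟩ := hβb
  set f2 : ℤ → ℝ := fun k => β k * Real.exp (-((k : ℝ) - s) ^ 2) * Real.exp (-(k : ℝ) + s)
    with hf2
  -- summability of f2
  have hf2sum : Summable f2 := by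
    have hg := (gauss_summable (s - 1/2)).mul_left (B * Real.exp (1/4))
    refine Summable.of_nonneg_of_le
      (fun k => by simp only [hf2]; have := hβ k; positivity) (fun k => ?_) hg
    have hkey : Real.exp (-((k : ℝ) - s) ^ 2) * Real.exp (-(k : ℝ) + s)
        = Real.exp (1/4) * Real.exp (-((k : ℝ) - (s - 1/2)) ^ 2) := by
      rw [← Real.exp_add, ← Real.exp_add]
      congr 1
      ring
    calc f2 k = β k * (Real.exp (-((k : ℝ) - s) ^ 2) * Real.exp (-(k : ℝ) + s)) := by
          rw [hf2]; ring
      _ = β k * (Real.exp (1/4) * Real.exp (-((k : ℝ) - (s - 1/2)) ^ 2)) := by rw [hkey]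
      _ ≤ B * (Real.exp (1/4) * Real.exp (-((k : ℝ) - (s - 1/2)) ^ 2)) := by
          apply mul_le_mul_of_nonneg_right (hB k); positivity
      _ = B * Real.exp (1/4) * Real.exp (-((k : ℝ) - (s - 1/2)) ^ 2) := by ring
  have hΞpos : 0 < Ξ := by
    rw [hΞ]
    exact Summable.tsum_pos (gauss_summable s) (fun n => (Real.exp_pos _).le) 0 (Real.exp_pos _)
  have hSpos : 0 < ∑' k : ℤ, f2 k :=
    Summable.tsum_pos hf2sum (fun k => by simp only [hf2]; have := hβ k; positivity) 0
      (by simp only [hf2]; have := hβ 0; positivity)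
  set S : ℝ := ∑' k : ℤ, f2 k with hSdef
  have hed : Real.exp d = Cl * Ξ / S := by
    rw [hd]; exact Real.exp_log (by positivity)
  -- detailed balance
  have db : ∀ n : ℤ, lam n * π n = mu (n + 1) * π (n + 1) := by
    intro n
    rw [hlam, hmu, hπ, hπ]
    have hidx : (n + 1 - 1 : ℤ) = n := by ring
    rw [hidx]
    push_cast
    have h : Real.exp (-(n : ℝ) + Ls) * Real.exp (-((n : ℝ) - s) ^ 2)
        = Real.exp ((n : ℝ) + 1 - Ms) * Real.exp (-((n : ℝ) + 1 - s) ^ 2) := by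
      rw [← Real.exp_add, ← Real.exp_add]
      congr 1
      rw [hLs, hMs]; ring
    have hΞne : Ξ ≠ 0 := ne_of_gt hΞpos
    field_simp
    linear_combination β n * h
  -- sum of π * lam
  have hlamsum : (∑' n : ℤ, π n * lam n) = Cl := by
    have heq : ∀ n : ℤ, π n * lam n = f2 n * (Real.exp d / Ξ) := by
      intro n
      rw [hπ, hlam, hf2, hLs]
      rw [show -(n : ℝ) + (s + d) = (-(n : ℝ) + s) + d by ring, Real.exp_add]
      ring
    rw [tsum_congr heq, tsum_mul_right, ← hSdef, hed]
    field_simp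
  refine ⟨?_, hlamsum, ?_, by rw [hLs, hMs]; ring⟩
  · intro n
    have h1 := db (n - 1)
    have h2 := db n
    rw [show (n - 1 + 1 : ℤ) = n by ring] at h1
    linarith
  · have heq : ∀ n : ℤ, π n * mu n = (fun m => π m * lam m) ((Equiv.subRight (1 : ℤ)) n) := by
      intro n
      have h1 := db (n - 1)
      rw [show (n - 1 + 1 : ℤ) = n by ring] at h1
      simpa [Equiv.subRight, mul_comm] using h1.symm
    rw [tsum_congr heq, (Equiv.subRight (1 : ℤ)).tsum_eq (fun m => π m * lam m), hlamsum]
end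

section
/- Let f : [0,∞) → ℝ be differentiable with f'(t) ≤ g(t)(C₁ - C₂ f(t)) for all t ≥ 0, where g is positive and C₂ > 0. Then f is bounded from above: f(t) ≤ max(f(0), C₁/C₂) for all t ≥ 0. -/
/-- Gronwall-type upper bound: if f' ≤ g(C₁ - C₂ f) with g positive continuous and
    C₂ > 0, then f(t) ≤ max(f(0), C₁/C₂) on [0,∞). -/
theorem stmt_13 (f f' g : ℝ → ℝ) (C₁ C₂ : ℝ) (hC₂ : 0 < C₂)
    (hg : ∀ t, 0 ≤ t → 0 < g t) (hgc : ContinuousOn g (Set.Ici (0 : ℝ)))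
    (hf : ∀ t, 0 ≤ t → HasDerivAt f (f' t) t)
    (hineq : ∀ t, 0 ≤ t → f' t ≤ g t * (C₁ - C₂ * f t)) :
    ∀ t, 0 ≤ t → f t ≤ max (f 0) (C₁ / C₂) := by
  set B := max (f 0) (C₁ / C₂) with hB
  intro t ht
  by_contra hcon
  push_neg at hcon
  have hfc : ContinuousOn f (Set.Icc 0 t) := fun u hu =>
    ((hf u hu.1).continuousAt).continuousWithinAt
  have hS : IsClosed (Set.Icc (0:ℝ) t ∩ f ⁻¹' Set.Iic B) :=
    hfc.preimage_isClosed_of_isClosed isClosed_Icc isClosed_Iic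
  set S := Set.Icc (0:ℝ) t ∩ f ⁻¹' Set.Iic B with hSdef
  have h0S : (0:ℝ) ∈ S := ⟨⟨le_refl 0, ht⟩, by simp [Set.mem_preimage, hB]⟩
  have hne : S.Nonempty := ⟨0, h0S⟩
  have hbdd : BddAbove S := ⟨t, fun u hu => hu.1.2⟩
  set s := sSup S with hs
  have hsS : s ∈ S := hS.csSup_mem hne hbdd
  have hst : s < t := by
    rcases lt_or_eq_of_le hsS.1.2 with h | h
    · exact h
    · exact absurd hsS.2 (by simp [h, not_le.mpr hcon])
  have hs0 : 0 ≤ s := hsS.1.1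
  -- On (s, t), f > B, hence deriv f < 0
  have hgt : ∀ u ∈ Set.Ioo s t, B < f u := by
    intro u hu
    by_contra h
    push_neg at h
    have : u ∈ S := ⟨⟨hs0.trans hu.1.le, hu.2.le⟩, h⟩
    exact absurd (le_csSup hbdd this) (not_le.mpr hu.1)
  have hderiv : ∀ u ∈ Set.Ioo s t, deriv f u < 0 := by
    intro u hu
    have hu0 : 0 ≤ u := hs0.trans hu.1.le
    have hd : deriv f u = f' u := (hf u hu0).deriv
    rw [hd]
    have hfu : C₁ / C₂ < f u := lt_of_le_of_lt (le_max_right _ _) (hgt u hu)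
    have hneg : C₁ - C₂ * f u < 0 := by
      have := (div_lt_iff₀ hC₂).mp hfu
      nlinarith
    have := hineq u hu0
    nlinarith [hg u hu0]
  have hanti : StrictAntiOn f (Set.Icc s t) := by
    apply strictAntiOn_of_deriv_neg (convex_Icc s t)
    · exact hfc.mono (Set.Icc_subset_Icc_left hs0)
    · intro u hu
      rw [interior_Icc] at hu
      exact hderiv u hu
  have : f t < f s :=
    hanti ⟨le_refl s, hst.le⟩ ⟨hst.le, le_refl t⟩ hst
  have : f t < B := lt_of_lt_of_le this hsS.2
  linarith
end

section
/- Fix β bounded positive, c = 1, C_λ = C_μ > 0, and fix a value K ∈ ℝ. Among the one-parameter family of fixed points {(L_s, M_s, π_s)}_{s∈ℝ}, there is exactly one value of s for which L_s + M_s + Σ_n n·π_s(n) = K; i.e., the function s ↦ 2s + Σ_n n·π_s(n) is a strictly increasing continuous bijection from ℝ onto ℝ. -/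
open Real Filter

set_option maxHeartbeats 1000000

namespace Stmt16Aux

noncomputable def B (s : ℝ) : ℝ := ∑' n : ℤ, Real.exp (-((n : ℝ) - s) ^ 2)
noncomputable def A (s : ℝ) : ℝ := ∑' n : ℤ, (n : ℝ) * Real.exp (-((n : ℝ) - s) ^ 2)

lemma exp_bound {n : ℤ} {s R : ℝ} (hs : |s| ≤ R) :
    Real.exp (-((n : ℝ) - s) ^ 2) ≤ Real.exp (2 * R + 1) * Real.exp (-2 * |(n : ℝ)|) := by
  rw [← Real.exp_add, Real.exp_le_exp]
  have h2 : |(n : ℝ)| ≤ |(n : ℝ) - s| + |s| := by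
    calc |(n : ℝ)| = |((n : ℝ) - s) + s| := by ring_nf
    _ ≤ |(n : ℝ) - s| + |s| := abs_add_le _ _
  nlinarith [sq_nonneg (|(n : ℝ) - s| - 1), sq_abs ((n : ℝ) - s), abs_nonneg ((n : ℝ) - s)]

lemma summable_aux (k : ℕ) : Summable (fun n : ℤ => |(n : ℝ)| ^ k * Real.exp (-2 * |(n : ℝ)|)) := by
  apply Summable.of_nat_of_neg
  · have := Real.summable_pow_mul_exp_neg_nat_mul k (r := 2) (by norm_num)
    apply this.congr
    intro n
    simp [abs_of_nonneg (Nat.cast_nonneg n : (0:ℝ) ≤ n)]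
  · have := Real.summable_pow_mul_exp_neg_nat_mul k (r := 2) (by norm_num)
    apply this.congr
    intro n
    simp [abs_of_nonneg (Nat.cast_nonneg n : (0:ℝ) ≤ n)]

lemma summable_B (s : ℝ) : Summable (fun n : ℤ => Real.exp (-((n : ℝ) - s) ^ 2)) := by
  apply Summable.of_nonneg_of_le (fun n => (Real.exp_pos _).le)
    (f := fun n : ℤ => Real.exp (2 * |s| + 1) * (|(n : ℝ)| ^ 0 * Real.exp (-2 * |(n : ℝ)|)))
  · intro n
    simpa using exp_bound (le_refl |s|)
  · exact (summable_aux 0).mul_left _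

lemma summable_A_norm (s : ℝ) :
    Summable (fun n : ℤ => ‖(n : ℝ) * Real.exp (-((n : ℝ) - s) ^ 2)‖) := by
  apply Summable.of_nonneg_of_le (fun n => norm_nonneg _)
    (f := fun n : ℤ => Real.exp (2 * |s| + 1) * (|(n : ℝ)| ^ 1 * Real.exp (-2 * |(n : ℝ)|)))
  · intro n
    rw [norm_mul, Real.norm_eq_abs, Real.norm_eq_abs, abs_of_pos (Real.exp_pos _), pow_one]
    have h1 := exp_bound (n := n) (le_refl |s|)
    calc |(n : ℝ)| * Real.exp (-((n : ℝ) - s) ^ 2)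
        ≤ |(n : ℝ)| * (Real.exp (2 * |s| + 1) * Real.exp (-2 * |(n : ℝ)|)) :=
          mul_le_mul_of_nonneg_left h1 (abs_nonneg _)
      _ = Real.exp (2 * |s| + 1) * (|(n : ℝ)| * Real.exp (-2 * |(n : ℝ)|)) := by ring
  · exact (summable_aux 1).mul_left _

lemma summable_A (s : ℝ) : Summable (fun n : ℤ => (n : ℝ) * Real.exp (-((n : ℝ) - s) ^ 2)) :=
  (summable_A_norm s).of_norm

lemma summable_B_norm (s : ℝ) :
    Summable (fun n : ℤ => ‖Real.exp (-((n : ℝ) - s) ^ 2)‖) := by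
  apply (summable_B s).congr
  intro n
  rw [Real.norm_eq_abs, abs_of_pos (Real.exp_pos _)]

lemma B_pos (s : ℝ) : 0 < B s :=
  Summable.tsum_pos (summable_B s) (fun n => (Real.exp_pos _).le) 0 (Real.exp_pos _)

lemma contB : Continuous B := by
  rw [continuous_iff_continuousAt]
  intro s₀
  have h : ContinuousOn B (Metric.ball s₀ 1) := by
    have : ContinuousOn (fun x : ℝ => ∑' n : ℤ, Real.exp (-((n : ℝ) - x) ^ 2))
        (Metric.ball s₀ 1) := by
      apply continuousOn_tsum
        (u := fun n : ℤ => Real.exp (2 * (|s₀| + 1) + 1) *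
          (|(n : ℝ)| ^ 0 * Real.exp (-2 * |(n : ℝ)|)))
      · intro i
        fun_prop
      · exact (summable_aux 0).mul_left _
      · intro n x hx
        rw [Real.norm_eq_abs, abs_of_pos (Real.exp_pos _), pow_zero, one_mul]
        apply exp_bound
        have := Metric.mem_ball.mp hx
        rw [Real.dist_eq] at this
        calc |x| = |(x - s₀) + s₀| := by ring_nf
          _ ≤ |x - s₀| + |s₀| := abs_add_le _ _
          _ ≤ |s₀| + 1 := by linarith
    exact this
  exact h.continuousAt (Metric.ball_mem_nhds _ one_pos)

lemma contA : Continuous A := by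
  rw [continuous_iff_continuousAt]
  intro s₀
  have h : ContinuousOn A (Metric.ball s₀ 1) := by
    have : ContinuousOn (fun x : ℝ => ∑' n : ℤ, (n : ℝ) * Real.exp (-((n : ℝ) - x) ^ 2))
        (Metric.ball s₀ 1) := by
      apply continuousOn_tsum
        (u := fun n : ℤ => Real.exp (2 * (|s₀| + 1) + 1) *
          (|(n : ℝ)| ^ 1 * Real.exp (-2 * |(n : ℝ)|)))
      · intro i
        fun_prop
      · exact (summable_aux 1).mul_left _
      · intro n x hx
        have hx1 : |x| ≤ |s₀| + 1 := by
          have := Metric.mem_ball.mp hx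
          rw [Real.dist_eq] at this
          calc |x| = |(x - s₀) + s₀| := by ring_nf
            _ ≤ |x - s₀| + |s₀| := abs_add_le _ _
            _ ≤ |s₀| + 1 := by linarith
        rw [norm_mul, Real.norm_eq_abs, Real.norm_eq_abs, abs_of_pos (Real.exp_pos _), pow_one]
        have h1 := exp_bound (n := n) hx1
        calc |(n : ℝ)| * Real.exp (-((n : ℝ) - x) ^ 2)
            ≤ |(n : ℝ)| * (Real.exp (2 * (|s₀| + 1) + 1) * Real.exp (-2 * |(n : ℝ)|)) :=
              mul_le_mul_of_nonneg_left h1 (abs_nonneg _)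
          _ = Real.exp (2 * (|s₀| + 1) + 1) * (|(n : ℝ)| * Real.exp (-2 * |(n : ℝ)|)) := by ring
    exact this
  exact h.continuousAt (Metric.ball_mem_nhds _ one_pos)

lemma B_shift (s : ℝ) : B (s + 1) = B s := by
  have h := (Equiv.subRight (1 : ℤ)).tsum_eq (fun n : ℤ => Real.exp (-((n : ℝ) - s) ^ 2))
  rw [B, B, ← h]
  apply tsum_congr
  intro n
  congr 1
  simp only [Equiv.subRight_apply]
  push_cast
  ring

lemma A_shift (s : ℝ) : A (s + 1) = A s + B s := by
  have h := (Equiv.subRight (1 : ℤ)).tsum_eq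
    (fun n : ℤ => ((n : ℝ) + 1) * Real.exp (-((n : ℝ) - s) ^ 2))
  have h1 : A (s + 1) = ∑' n : ℤ, ((n : ℝ) + 1) * Real.exp (-((n : ℝ) - s) ^ 2) := by
    rw [A, ← h]
    apply tsum_congr
    intro n
    simp only [Equiv.subRight_apply]
    push_cast
    ring_nf
  rw [h1]
  have h2 : ∀ n : ℤ, ((n : ℝ) + 1) * Real.exp (-((n : ℝ) - s) ^ 2)
      = (n : ℝ) * Real.exp (-((n : ℝ) - s) ^ 2) + Real.exp (-((n : ℝ) - s) ^ 2) := by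
    intro n; ring
  rw [tsum_congr h2, Summable.tsum_add (summable_A s) (summable_B s)]
  rfl

lemma mean_mono {s t : ℝ} (hst : s < t) : A s * B t ≤ A t * B s := by
  set c := Real.exp (s ^ 2 - t ^ 2) with hc
  have hcpos : 0 < c := Real.exp_pos _
  set w : ℤ → ℝ := fun n => Real.exp (-((n : ℝ) - s) ^ 2) with hw
  set r : ℤ → ℝ := fun n => Real.exp (2 * (t - s) * (n : ℝ)) with hr
  have hv : ∀ n : ℤ, Real.exp (-((n : ℝ) - t) ^ 2) = c * (w n * r n) := by
    intro n
    rw [hc, hw, hr, ← Real.exp_add, ← Real.exp_add]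
    congr 1
    ring
  -- summability facts
  have hw_sum : Summable w := summable_B s
  have hw_norm : Summable (fun n => ‖w n‖) := summable_B_norm s
  have hnw_sum : Summable (fun n : ℤ => (n : ℝ) * w n) := summable_A s
  have hnw_norm : Summable (fun n : ℤ => ‖(n : ℝ) * w n‖) := summable_A_norm s
  have hwr_eq : ∀ n : ℤ, w n * r n = c⁻¹ * Real.exp (-((n : ℝ) - t) ^ 2) := by
    intro n
    rw [hv n]
    field_simp
  have hwr_sum : Summable (fun n : ℤ => w n * r n) := by
    apply ((summable_B t).mul_left c⁻¹).congr
    intro n; rw [hwr_eq n]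
  have hwr_norm : Summable (fun n : ℤ => ‖w n * r n‖) := by
    apply hwr_sum.congr
    intro n
    rw [Real.norm_eq_abs, abs_of_pos (mul_pos (Real.exp_pos _) (Real.exp_pos _))]
  have hnwr_sum : Summable (fun n : ℤ => (n : ℝ) * (w n * r n)) := by
    apply ((summable_A t).mul_left c⁻¹).congr
    intro n; rw [hwr_eq n]; ring
  have hnwr_norm : Summable (fun n : ℤ => ‖(n : ℝ) * (w n * r n)‖) := by
    apply ((summable_A_norm t).mul_left c⁻¹).congr
    intro n
    rw [norm_mul, norm_mul, hwr_eq n, norm_mul, Real.norm_eq_abs (c⁻¹),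
      abs_of_pos (inv_pos.mpr hcpos)]
    ring
  -- rewrite A t, B t
  have hBt : B t = c * ∑' n : ℤ, w n * r n := by
    rw [B, tsum_congr hv, tsum_mul_left]
  have hAt : A t = c * ∑' n : ℤ, (n : ℝ) * (w n * r n) := by
    rw [A]
    have : ∀ n : ℤ, (n : ℝ) * Real.exp (-((n : ℝ) - t) ^ 2) = c * ((n : ℝ) * (w n * r n)) := by
      intro n; rw [hv n]; ring
    rw [tsum_congr this, tsum_mul_left]
  rw [hBt, hAt]
  have key : A s * (∑' n : ℤ, w n * r n) ≤ (∑' n : ℤ, (n : ℝ) * (w n * r n)) * B s := by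
    -- expand products as sums over pairs
    have e1 : (∑' n : ℤ, (n : ℝ) * (w n * r n)) * B s
        = ∑' p : ℤ × ℤ, ((p.1 : ℝ) * (w p.1 * r p.1)) * w p.2 :=
      tsum_mul_tsum_of_summable_norm (f := fun n : ℤ => (n : ℝ) * (w n * r n)) (g := w) hnwr_norm hw_norm
    have e2 : A s * (∑' n : ℤ, w n * r n)
        = ∑' p : ℤ × ℤ, ((p.1 : ℝ) * w p.1) * (w p.2 * r p.2) :=
      tsum_mul_tsum_of_summable_norm (f := fun n : ℤ => (n : ℝ) * w n) (g := fun n : ℤ => w n * r n) hnw_norm hwr_norm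
    have e3 : (∑' n : ℤ, (n : ℝ) * (w n * r n)) * B s
        = ∑' p : ℤ × ℤ, w p.1 * ((p.2 : ℝ) * (w p.2 * r p.2)) := by
      rw [mul_comm]
      exact tsum_mul_tsum_of_summable_norm (f := w) (g := fun n : ℤ => (n : ℝ) * (w n * r n)) hw_norm hnwr_norm
    have e4 : A s * (∑' n : ℤ, w n * r n)
        = ∑' p : ℤ × ℤ, (w p.1 * r p.1) * ((p.2 : ℝ) * w p.2) := by
      rw [mul_comm]
      exact tsum_mul_tsum_of_summable_norm (f := fun n : ℤ => w n * r n) (g := fun n : ℤ => (n : ℝ) * w n) hwr_norm hnw_norm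
    have s1 : Summable (fun p : ℤ × ℤ => ((p.1 : ℝ) * (w p.1 * r p.1)) * w p.2) :=
      summable_mul_of_summable_norm (f := fun n : ℤ => (n : ℝ) * (w n * r n)) (g := w) hnwr_norm hw_norm
    have s2 : Summable (fun p : ℤ × ℤ => ((p.1 : ℝ) * w p.1) * (w p.2 * r p.2)) :=
      summable_mul_of_summable_norm (f := fun n : ℤ => (n : ℝ) * w n) (g := fun n : ℤ => w n * r n) hnw_norm hwr_norm
    have s3 : Summable (fun p : ℤ × ℤ => w p.1 * ((p.2 : ℝ) * (w p.2 * r p.2))) :=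
      summable_mul_of_summable_norm (f := w) (g := fun n : ℤ => (n : ℝ) * (w n * r n)) hw_norm hnwr_norm
    have s4 : Summable (fun p : ℤ × ℤ => (w p.1 * r p.1) * ((p.2 : ℝ) * w p.2)) :=
      summable_mul_of_summable_norm (f := fun n : ℤ => w n * r n) (g := fun n : ℤ => (n : ℝ) * w n) hwr_norm hnw_norm
    have hdiff : 0 ≤ 2 * ((∑' n : ℤ, (n : ℝ) * (w n * r n)) * B s - A s * (∑' n : ℤ, w n * r n)) := by
      have expand : 2 * ((∑' n : ℤ, (n : ℝ) * (w n * r n)) * B s - A s * (∑' n : ℤ, w n * r n))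
          = ∑' p : ℤ × ℤ, (w p.1 * w p.2 * (((p.1 : ℝ) - (p.2 : ℝ)) * (r p.1 - r p.2))) := by
        have step : 2 * ((∑' n : ℤ, (n : ℝ) * (w n * r n)) * B s - A s * (∑' n : ℤ, w n * r n))
            = (∑' p : ℤ × ℤ, ((p.1 : ℝ) * (w p.1 * r p.1)) * w p.2)
              + (∑' p : ℤ × ℤ, w p.1 * ((p.2 : ℝ) * (w p.2 * r p.2)))
              - ((∑' p : ℤ × ℤ, ((p.1 : ℝ) * w p.1) * (w p.2 * r p.2))
              + (∑' p : ℤ × ℤ, (w p.1 * r p.1) * ((p.2 : ℝ) * w p.2))) := by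
          rw [← e1, ← e2, ← e3, ← e4]; ring
        rw [step, ← Summable.tsum_add s1 s3, ← Summable.tsum_add s2 s4, ← Summable.tsum_sub ((s1.add s3)) ((s2.add s4))]
        apply tsum_congr
        intro p
        ring
      rw [expand]
      apply tsum_nonneg
      intro p
      apply mul_nonneg (mul_nonneg (Real.exp_pos _).le (Real.exp_pos _).le)
      rcases le_total p.1 p.2 with h | h
      · apply mul_nonneg_of_nonpos_of_nonpos
        · have : (p.1 : ℝ) ≤ (p.2 : ℝ) := by exact_mod_cast h
          linarith
        · have : r p.1 ≤ r p.2 := by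
            rw [hr]
            apply Real.exp_le_exp.mpr
            have hp : (p.1 : ℝ) ≤ (p.2 : ℝ) := by exact_mod_cast h
            nlinarith
          linarith
      · apply mul_nonneg
        · have : (p.2 : ℝ) ≤ (p.1 : ℝ) := by exact_mod_cast h
          linarith
        · have : r p.2 ≤ r p.1 := by
            rw [hr]
            apply Real.exp_le_exp.mpr
            have hp : (p.2 : ℝ) ≤ (p.1 : ℝ) := by exact_mod_cast h
            nlinarith
          linarith
    linarith
  nlinarith [key, hcpos]

end Stmt16Aux

open Stmt16Aux in
/-- The map s ↦ 2s + mean(π_s) is a strictly increasing continuous bijection of ℝ,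
    so each level set of the conserved quantity K contains exactly one fixed point. -/
theorem stmt_16 (F : ℝ → ℝ)
    (hF : ∀ s : ℝ, F s = 2 * s +
      (∑' n : ℤ, (n : ℝ) * Real.exp (-((n : ℝ) - s) ^ 2)) /
        (∑' n : ℤ, Real.exp (-((n : ℝ) - s) ^ 2))) :
    StrictMono F ∧ Continuous F ∧ Function.Bijective F := by
  have hFAB : ∀ s : ℝ, F s = 2 * s + A s / B s := hF
  have hmono : StrictMono F := by
    intro s t hst
    rw [hFAB s, hFAB t]
    have h1 : A s / B s ≤ A t / B t := by
      rw [div_le_div_iff₀ (B_pos s) (B_pos t)]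
      exact mean_mono hst
    linarith
  have hcont : Continuous F := by
    have : F = fun s => 2 * s + A s / B s := funext hFAB
    rw [this]
    exact ((continuous_const.mul continuous_id).add
      (contA.div contB (fun s => (B_pos s).ne')))
  refine ⟨hmono, hcont, hmono.injective, ?_⟩
  have hstep : ∀ s : ℝ, F (s + 1) = F s + 3 := by
    intro s
    rw [hFAB (s + 1), hFAB s, A_shift, B_shift, add_div, div_self (B_pos s).ne']
    ring
  have hnat : ∀ (n : ℕ) (s : ℝ), F (s + n) = F s + 3 * n := by
    intro n
    induction n with
    | zero => intro s; simp
    | succ k ih =>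
      intro s
      have : s + (k + 1 : ℕ) = (s + k) + 1 := by push_cast; ring
      rw [this, hstep, ih s]
      push_cast
      ring
  have hmonotone := hmono.monotone
  have h_top : Tendsto F atTop atTop := by
    have hlin : Tendsto (fun s : ℝ => F 0 + 3 * s - 3) atTop atTop := by
      apply tendsto_atTop_add_const_right
      apply tendsto_atTop_add_const_left
      exact (tendsto_id.const_mul_atTop (by norm_num : (0:ℝ) < 3))
    apply tendsto_atTop_mono' atTop ?_ hlin
    · filter_upwards [eventually_ge_atTop (0 : ℝ)] with s hs
      have h1 : ((⌊s⌋₊ : ℕ) : ℝ) ≤ s := Nat.floor_le hs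
      have h2 : s < (⌊s⌋₊ : ℕ) + 1 := Nat.lt_floor_add_one s
      have h3 : F ((0 : ℝ) + (⌊s⌋₊ : ℕ)) ≤ F s := by
        apply hmonotone
        simpa using h1
      rw [hnat ⌊s⌋₊ 0] at h3
      linarith
  have h_bot : Tendsto F atBot atBot := by
    have hlin : Tendsto (fun s : ℝ => F 1 + 3 * s) atBot atBot := by
      apply tendsto_atBot_add_const_left
      exact (tendsto_id.const_mul_atBot (by norm_num : (0:ℝ) < 3))
    apply tendsto_atBot_mono' atBot ?_ hlin
    · filter_upwards [eventually_le_atBot (0 : ℝ)] with s hs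
      have hns : (0 : ℝ) ≤ -s := by linarith
      set n := ⌈-s⌉₊ with hn
      have h1 : -s ≤ (n : ℝ) := Nat.le_ceil (-s)
      have h2 : (n : ℝ) < -s + 1 := Nat.ceil_lt_add_one hns
      have h3 : F (s + n) ≤ F 1 := by
        apply hmonotone
        linarith
      rw [hnat n s] at h3
      linarith
  exact hcont.surjective h_top h_bot
end
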